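/- arXiv:2304.04530 — 4 statements merged into one kernel-verified Lean document; each statement's English description precedes it below -/
import Mathlib

section
/- Let n ≥ 1, let D ⊆ ℝⁿ be a nonempty connected open set, and let f : D → ℝ be real-analytic on D and not identically zero on D. Then the zero set Z_f := {x ∈ D : f(x) = 0} has zero n-dimensional Lebesgue measure. -/
/-!
Suppose `f` is analytic on `s ×ˢ t` and `f (x₀, y₀) ≠ 0`. Off the null zero set of `f (·, y₀)`
the slice `f (x, ·)` does not vanish identically on `t`, so by Fubini the zero set of `f` is null
whenever zero sets of non-vanishing analytic functions are null on `s` and on `t`. In dimension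
one this holds on connected sets since zeros are discrete, so induction on the dimension gives it
on boxes. A connected open set is covered by boxes, on none of which `f` vanishes identically by
the identity theorem.
-/

open MeasureTheory Set Filter Topology

theorem IsOpen.measurableSet_sep_eq_zero {X : Type*} [TopologicalSpace X] [MeasurableSpace X]
    [OpensMeasurableSpace X] {U : Set X} {f : X → ℝ} (hU : IsOpen U) (hf : ContinuousOn f U) :
    MeasurableSet {x ∈ U | f x = 0} := by
  have hsep : {x ∈ U | f x = 0} = U \ (U ∩ f ⁻¹' {0}ᶜ) := by
    ext x
    by_cases hx : x ∈ U <;> simp [hx]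
  rw [hsep]
  exact hU.measurableSet.diff (hf.isOpen_inter_preimage hU isOpen_compl_singleton).measurableSet

variable {E F : Type*} [NormedAddCommGroup E] [NormedSpace ℝ E] [MeasurableSpace E]
  [NormedAddCommGroup F] [NormedSpace ℝ F] [MeasurableSpace F]

def AnalyticZeroSetsNull (μ : Measure E) (s : Set E) : Prop :=
  ∀ f : E → ℝ, AnalyticOnNhd ℝ f s → (∃ x ∈ s, f x ≠ 0) → μ {x ∈ s | f x = 0} = 0

theorem analyticZeroSetsNull_real_of_isPreconnected {μ : Measure ℝ} [NullSingletonClass μ]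
    {s : Set ℝ} (hs : MeasurableSet s) (hsc : IsPreconnected s) : AnalyticZeroSetsNull μ s := by
  rintro f hf ⟨x, hx, hfx⟩
  have hcodiscrete : ∀ᶠ t in codiscreteWithin s, f t ≠ 0 :=
    (hf.eqOn_zero_or_eventually_ne_zero_of_preconnected hsc).resolve_left fun h => hfx (h hx)
  have hae : ∀ᵐ t ∂μ.restrict s, f t ≠ 0 := ae_restrict_le_codiscreteWithin hs hcodiscrete
  rw [ae_restrict_iff' hs] at hae
  exact measure_eq_zero_iff_ae_notMem.2 (hae.mono fun t ht ⟨hts, hft⟩ => ht hts hft)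

theorem AnalyticZeroSetsNull.prod [OpensMeasurableSpace E] [OpensMeasurableSpace F]
    [SecondCountableTopologyEither E F]
    {μ : Measure E} {ν : Measure F} [SFinite ν] {s : Set E} {t : Set F}
    (hso : IsOpen s) (hto : IsOpen t) (hs : AnalyticZeroSetsNull μ s)
    (ht : AnalyticZeroSetsNull ν t) : AnalyticZeroSetsNull (μ.prod ν) (s ×ˢ t) := by
  rintro f hf ⟨⟨x₀, y₀⟩, ⟨hx₀, hy₀⟩, hfne⟩
  refine Measure.measure_prod_null_of_ae_null
    ((hso.prod hto).measurableSet_sep_eq_zero hf.continuousOn) ?_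
  have hline : μ {x ∈ s | f (x, y₀) = 0} = 0 :=
    hs _ (hf.comp (analyticOnNhd_id.prod analyticOnNhd_const) fun x hx => ⟨hx, hy₀⟩)
      ⟨x₀, hx₀, hfne⟩
  filter_upwards [measure_eq_zero_iff_ae_notMem.1 hline] with x hxline
  by_cases hxs : x ∈ s
  · exact measure_mono_null (t := {y ∈ t | f (x, y) = 0}) (fun y hy => ⟨hy.1.2, hy.2⟩)
      (ht _ (hf.comp (analyticOnNhd_const.prod analyticOnNhd_id) fun y hy => ⟨hxs, hy⟩)
        ⟨y₀, hy₀, fun h => hxline ⟨hxs, h⟩⟩)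
  · exact measure_mono_null (t := ∅) (fun y hy => hxs hy.1.1) measure_empty

theorem AnalyticZeroSetsNull.preimage [BorelSpace E] [BorelSpace F] {μ : Measure E}
    {ν : Measure F} {t : Set F} (ht : AnalyticZeroSetsNull ν t) (L : E ≃L[ℝ] F)
    (hL : MeasurePreserving L μ ν) : AnalyticZeroSetsNull μ (L ⁻¹' t) := by
  rintro f hf ⟨x, hx, hfx⟩
  have hZ : {x ∈ L ⁻¹' t | f x = 0} = L ⁻¹' {y ∈ t | f (L.symm y) = 0} := by
    ext x
    simp
  rw [hZ, hL.measure_preimage_emb L.toHomeomorph.measurableEmbedding]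
  refine ht _ (hf.comp (L.symm.analyticOnNhd _) fun y hy => ?_) ⟨L x, hx, by simpa using hfx⟩
  simpa using hy

theorem AnalyticZeroSetsNull.of_isPreconnected [SecondCountableTopology E]
    {μ : Measure E} {U : Set E} (hU : IsPreconnected U)
    (hloc : ∀ x ∈ U, ∃ B ∈ 𝓝 x, B ⊆ U ∧ AnalyticZeroSetsNull μ B) :
    AnalyticZeroSetsNull μ U := by
  rintro f hf ⟨x₀, hx₀, hfx₀⟩
  refine measure_null_of_locally_null _ fun x hx => ?_
  obtain ⟨B, hBx, hBU, hB⟩ := hloc x hx.1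
  refine ⟨{y ∈ B | f y = 0}, mem_of_superset (inter_mem_nhdsWithin _ hBx)
    fun y hy => ⟨hy.2, hy.1.2⟩, hB f (hf.mono hBU) ?_⟩
  by_contra! hB0
  exact hfx₀ (hf.eqOn_zero_of_preconnected_of_eventuallyEq_zero hU hx.1
    (eventually_of_mem hBx hB0) hx₀)

theorem analyticZeroSetsNull_univ_pi {n : ℕ} {s : Fin n → Set ℝ} (hso : ∀ i, IsOpen (s i))
    (hsc : ∀ i, IsPreconnected (s i)) : AnalyticZeroSetsNull volume (univ.pi s) := by
  induction n with
  | zero =>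
    rintro f - ⟨x, -, hfx⟩
    convert measure_empty (μ := volume)
    ext y
    simp [Subsingleton.elim y x, hfx]
  | succ n ih =>
    let L := Fin.consEquivL ℝ (fun _ : Fin (n + 1) => ℝ)
    have hL : MeasurePreserving L.symm volume volume := by
      have hcoe : ⇑L.symm = MeasurableEquiv.piFinSuccAbove (fun _ : Fin (n + 1) => ℝ) 0 := by
        ext x <;> simp [L, Fin.tail]
      exact hcoe ▸ volume_preserving_piFinSuccAbove (fun _ : Fin (n + 1) => ℝ) 0
    have hpi : univ.pi s = L.symm ⁻¹' (s 0 ×ˢ univ.pi fun i => s i.succ) := by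
      ext x
      simp [L, Fin.forall_fin_succ, Fin.tail]
    rw [hpi]
    refine AnalyticZeroSetsNull.preimage ?_ L.symm hL
    exact (analyticZeroSetsNull_real_of_isPreconnected (hso 0).measurableSet (hsc 0)).prod
      (hso 0) (isOpen_set_pi finite_univ fun i _ => hso i.succ)
      (ih (fun i => hso i.succ) fun i => hsc i.succ)

theorem analyticZeroSetsNull_of_isOpen_of_isPreconnected {n : ℕ} {U : Set (Fin n → ℝ)}
    (hUo : IsOpen U) (hUc : IsPreconnected U) : AnalyticZeroSetsNull volume U := by
  refine .of_isPreconnected hUc fun x hx => ?_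
  obtain ⟨ε, hε, hball⟩ := Metric.isOpen_iff.1 hUo x hx
  refine ⟨Metric.ball x ε, Metric.ball_mem_nhds x hε, hball, ?_⟩
  rw [ball_pi x hε]
  exact analyticZeroSetsNull_univ_pi (fun _ => Metric.isOpen_ball)
    fun _ => (convex_ball _ _).isPreconnected

theorem zero_set_of_analytic_measure_zero_general
    (n : ℕ)
    (D : Set (EuclideanSpace ℝ (Fin n)))
    (hDopen : IsOpen D) (hDconn : IsConnected D)
    (f : EuclideanSpace ℝ (Fin n) → ℝ)
    (hf : AnalyticOnNhd ℝ f D)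
    (hne : ∃ x ∈ D, f x ≠ 0) :
    MeasureTheory.volume {x ∈ D | f x = 0} = 0 := by
  let L := PiLp.continuousLinearEquiv 2 ℝ fun _ : Fin n => ℝ
  have hD : AnalyticZeroSetsNull volume (L.symm ⁻¹' D) :=
    analyticZeroSetsNull_of_isOpen_of_isPreconnected (hDopen.preimage L.symm.continuous)
      (L.symm.toHomeomorph.isPreconnected_preimage.2 hDconn.isPreconnected)
  have hD' := hD.preimage L (PiLp.volume_preserving_ofLp _)
  rw [L.preimage_symm_preimage] at hD'
  exact hD' f hf hne

/-- **Zeros of a real-analytic function have zero Lebesgue measure.**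
If `D ⊆ ℝⁿ` (with `n ≥ 1`) is a nonempty connected open set and `f : ℝⁿ → ℝ` is real-analytic
on `D` and not identically zero on `D`, then the zero set `{x ∈ D : f x = 0}` has zero
`n`-dimensional Lebesgue measure. -/
theorem zero_set_of_analytic_measure_zero
    (n : ℕ) (hn : 1 ≤ n)
    (D : Set (EuclideanSpace ℝ (Fin n)))
    (hDopen : IsOpen D) (hDconn : IsConnected D)
    (f : EuclideanSpace ℝ (Fin n) → ℝ)
    (hf : AnalyticOnNhd ℝ f D)
    (hne : ∃ x ∈ D, f x ≠ 0) :
    MeasureTheory.volume {x ∈ D | f x = 0} = 0 :=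
  zero_set_of_analytic_measure_zero_general n D hDopen hDconn f hf hne
end

section
/- Let γ = (γ₁, γ₂) : ℝ → ℝ² be real-analytic, unit-speed, positively oriented and strictly convex, let τ₀ satisfy γ₁(τ₀) > 0, γ₁'(τ₀) < 0 and γ₂'(τ₀) < 0, and set κ(τ) := √(γ₁''(τ)² + γ₂''(τ)²). Define x(τ) := γ₁(τ₀) + (γ₁'(τ₀)/γ₂'(τ₀))·(γ₂(τ) − γ₂(τ₀)), so that x'(τ) = (γ₁'(τ₀)/γ₂'(τ₀))·γ₂'(τ). Then, as τ → τ₀ from the left, γ₂'(τ)·√(γ₁(τ)² − x(τ)²) / (γ₁(τ)γ₁'(τ) − x(τ)x'(τ)) converges to |γ₂'(τ₀)|·√(|γ₂'(τ₀)| / (κ(τ₀)·γ₁(τ₀))). -/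
open Topology

/-- The curvature `κ(τ) := √(γ₁''(τ)² + γ₂''(τ)²)` of a unit-speed planar curve. -/
noncomputable def curvature (γ₁ γ₂ : ℝ → ℝ) (τ : ℝ) : ℝ :=
  Real.sqrt ((deriv (deriv γ₁) τ) ^ 2 + (deriv (deriv γ₂) τ) ^ 2)

/-- The `x`-coordinate `x(τ) := γ₁(τ₀) + (γ₁'(τ₀)/γ₂'(τ₀))(γ₂(τ) − γ₂(τ₀))` of the point of
the tangent-plane chord at height `γ₂(τ)`. -/
noncomputable def chordX (γ₁ γ₂ : ℝ → ℝ) (τ₀ τ : ℝ) : ℝ :=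
  γ₁ τ₀ + (deriv γ₁ τ₀ / deriv γ₂ τ₀) * (γ₂ τ - γ₂ τ₀)

/-! With `f = γ₁² - x²` and `g = γ₁γ₁' - x x'` we have `f' = 2g` and `f(τ₀) = g(τ₀) = 0`, while
`g'(τ₀) = γ₁(τ₀)κ(τ₀)/|γ₂'(τ₀)| > 0`: for a unit-speed curve the curvature equals the convexity
determinant `γ₁'γ₂'' - γ₂'γ₁''`. Hence `f ~ g'(τ₀)(τ - τ₀)²` and `g ~ g'(τ₀)(τ - τ₀)`, and since
`√((τ - τ₀)²) = τ₀ - τ` on the left, `γ₂'√f / g → -γ₂'(τ₀)/√(g'(τ₀))`. -/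

open Filter

section QuadraticVanishing

variable {f g : ℝ → ℝ} {τ₀ a : ℝ}

theorem tendsto_div_sub_sq_of_hasDerivAt (hf₀ : f τ₀ = 0) (hg₀ : g τ₀ = 0)
    (hf : ∀ᶠ τ in 𝓝 τ₀, HasDerivAt f (2 * g τ) τ) (hg : HasDerivAt g a τ₀) :
    Tendsto (fun τ => f τ / (τ - τ₀) ^ 2) (𝓝[≠] τ₀) (𝓝 a) := by
  have hslope : Tendsto (fun τ => 2 * g τ / (2 * (τ - τ₀))) (𝓝[≠] τ₀) (𝓝 a) := by
    refine hg.tendsto_slope.congr fun τ => ?_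
    rw [slope_def_field, hg₀, sub_zero, mul_div_mul_left _ _ two_ne_zero]
  refine HasDerivAt.lhopital_zero_nhdsNE (nhdsWithin_le_nhds hf) ?_ ?_ ?_ ?_ hslope
  · refine Eventually.of_forall fun τ => ?_
    simpa using ((hasDerivAt_id' τ).sub_const τ₀).fun_pow 2
  · filter_upwards [self_mem_nhdsWithin] with τ hτ
    exact mul_ne_zero two_ne_zero (sub_ne_zero.mpr hτ)
  · simpa [hf₀] using hf.self_of_nhds.continuousAt.tendsto.mono_left nhdsWithin_le_nhds
  · exact tendsto_nhdsWithin_of_tendsto_nhds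
      (((continuous_sub_right τ₀).pow 2).tendsto' τ₀ 0 (by simp))

theorem tendsto_mul_sqrt_div_nhdsLT_of_hasDerivAt {w : ℝ → ℝ} {w₀ : ℝ} (ha : 0 < a)
    (hf : ∀ᶠ τ in 𝓝 τ₀, HasDerivAt f (2 * g τ) τ) (hg : HasDerivAt g a τ₀)
    (hf₀ : f τ₀ = 0) (hg₀ : g τ₀ = 0) (hw : Tendsto w (𝓝[<] τ₀) (𝓝 w₀)) :
    Tendsto (fun τ => w τ * √(f τ) / g τ) (𝓝[<] τ₀) (𝓝 (-w₀ / √a)) := by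
  have hquad := (tendsto_div_sub_sq_of_hasDerivAt hf₀ hg₀ hf hg).mono_left
    (nhdsLT_le_nhdsNE τ₀)
  have hslope : Tendsto (fun τ => g τ / (τ - τ₀)) (𝓝[<] τ₀) (𝓝 a) := by
    refine (hg.tendsto_slope.mono_left (nhdsLT_le_nhdsNE τ₀)).congr fun τ => ?_
    rw [slope_def_field, hg₀, sub_zero]
  have hlim : Tendsto (fun τ => -(w τ * √(f τ / (τ - τ₀) ^ 2) / (g τ / (τ - τ₀))))
      (𝓝[<] τ₀) (𝓝 (-(w₀ * √a / a))) :=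
    ((hw.mul (Real.continuous_sqrt.continuousAt.tendsto.comp hquad)).div hslope ha.ne').neg
  rw [mul_div_assoc, Real.sqrt_div_self', mul_one_div, ← neg_div] at hlim
  refine hlim.congr' ?_
  filter_upwards [self_mem_nhdsWithin] with τ (hτ : τ < τ₀)
  have hd : τ - τ₀ ≠ 0 := sub_ne_zero.mpr hτ.ne
  rw [Real.sqrt_div' _ (sq_nonneg _), Real.sqrt_sq_eq_abs, abs_of_neg (sub_neg.mpr hτ)]
  field_simp

end QuadraticVanishing

section UnitSpeed

variable {γ₁ γ₂ : ℝ → ℝ} {τ : ℝ}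

theorem deriv_mul_deriv_deriv_add_eq_zero_of_unit_speed
    (hunit : ∀ τ, deriv γ₁ τ ^ 2 + deriv γ₂ τ ^ 2 = 1)
    (h₁ : DifferentiableAt ℝ (deriv γ₁) τ) (h₂ : DifferentiableAt ℝ (deriv γ₂) τ) :
    deriv γ₁ τ * deriv (deriv γ₁) τ + deriv γ₂ τ * deriv (deriv γ₂) τ = 0 := by
  have h : HasDerivAt (fun x => deriv γ₁ x ^ 2 + deriv γ₂ x ^ 2) _ τ :=
    (h₁.hasDerivAt.fun_pow 2).add (h₂.hasDerivAt.fun_pow 2)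
  simp only [hunit] at h
  have h₀ := h.unique (hasDerivAt_const τ 1)
  norm_num at h₀
  linarith

/-- Lagrange's identity `|γ''|² = |γ'|²|γ''|² = (γ' × γ'')² + (γ' · γ'')²`, where the dot product
vanishes for a unit-speed curve. -/
theorem curvature_eq_abs_of_unit_speed
    (hunit : ∀ τ, deriv γ₁ τ ^ 2 + deriv γ₂ τ ^ 2 = 1)
    (h₁ : DifferentiableAt ℝ (deriv γ₁) τ) (h₂ : DifferentiableAt ℝ (deriv γ₂) τ) :
    curvature γ₁ γ₂ τ = |deriv γ₁ τ * deriv (deriv γ₂) τ - deriv γ₂ τ * deriv (deriv γ₁) τ| := by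
  have horth := deriv_mul_deriv_deriv_add_eq_zero_of_unit_speed hunit h₁ h₂
  have hlagrange : deriv (deriv γ₁) τ ^ 2 + deriv (deriv γ₂) τ ^ 2 =
      (deriv γ₁ τ * deriv (deriv γ₂) τ - deriv γ₂ τ * deriv (deriv γ₁) τ) ^ 2 := by
    linear_combination -(deriv (deriv γ₁) τ ^ 2 + deriv (deriv γ₂) τ ^ 2) * hunit τ
      + (deriv γ₁ τ * deriv (deriv γ₁) τ + deriv γ₂ τ * deriv (deriv γ₂) τ) * horth
  rw [curvature, hlagrange, Real.sqrt_sq_eq_abs]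

end UnitSpeed

section Chord

variable {γ₁ γ₂ : ℝ → ℝ} {τ₀ τ : ℝ}

@[simp]
theorem chordX_self : chordX γ₁ γ₂ τ₀ τ₀ = γ₁ τ₀ := by
  simp [chordX]

theorem hasDerivAt_chordX (h : DifferentiableAt ℝ γ₂ τ) :
    HasDerivAt (chordX γ₁ γ₂ τ₀) (deriv γ₁ τ₀ / deriv γ₂ τ₀ * deriv γ₂ τ) τ :=
  ((h.hasDerivAt.sub_const (γ₂ τ₀)).const_mul _).const_add (γ₁ τ₀)

theorem hasDerivAt_sq_sub_chordX_sq (h₁ : DifferentiableAt ℝ γ₁ τ)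
    (h₂ : DifferentiableAt ℝ γ₂ τ) :
    HasDerivAt (fun τ => γ₁ τ ^ 2 - chordX γ₁ γ₂ τ₀ τ ^ 2)
      (2 * (γ₁ τ * deriv γ₁ τ
        - chordX γ₁ γ₂ τ₀ τ * (deriv γ₁ τ₀ / deriv γ₂ τ₀ * deriv γ₂ τ))) τ := by
  refine ((h₁.hasDerivAt.fun_pow 2).sub ((hasDerivAt_chordX h₂).fun_pow 2)).congr_deriv ?_
  norm_num
  ring

/-- At `τ₀` the terms `γ₁'²` and `x'²` cancel, leaving `γ₁(τ₀)(γ₁'' - (γ₁'/γ₂')γ₂'')`. -/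
theorem hasDerivAt_mul_deriv_sub_chordX_mul_deriv (h₂' : deriv γ₂ τ₀ ≠ 0)
    (h₁ : DifferentiableAt ℝ γ₁ τ₀) (h₂ : DifferentiableAt ℝ γ₂ τ₀)
    (hd₁ : DifferentiableAt ℝ (deriv γ₁) τ₀) (hd₂ : DifferentiableAt ℝ (deriv γ₂) τ₀) :
    HasDerivAt
      (fun τ => γ₁ τ * deriv γ₁ τ
        - chordX γ₁ γ₂ τ₀ τ * (deriv γ₁ τ₀ / deriv γ₂ τ₀ * deriv γ₂ τ))
      (γ₁ τ₀ * (deriv γ₁ τ₀ * deriv (deriv γ₂) τ₀ - deriv γ₂ τ₀ * deriv (deriv γ₁) τ₀)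
        / -deriv γ₂ τ₀) τ₀ := by
  refine ((h₁.hasDerivAt.mul hd₁.hasDerivAt).sub
    ((hasDerivAt_chordX h₂).mul (hd₂.hasDerivAt.const_mul _))).congr_deriv ?_
  rw [chordX_self]
  field_simp
  ring

end Chord

theorem slope_limit_tangent_section_general
    (γ₁ γ₂ : ℝ → ℝ)
    (hγ₁ : AnalyticOnNhd ℝ γ₁ Set.univ) (hγ₂ : AnalyticOnNhd ℝ γ₂ Set.univ)
    (hunit : ∀ τ, (deriv γ₁ τ) ^ 2 + (deriv γ₂ τ) ^ 2 = 1)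
    (hconv : ∀ τ, 0 < deriv γ₁ τ * deriv (deriv γ₂) τ - deriv γ₂ τ * deriv (deriv γ₁) τ)
    (τ₀ : ℝ) (hpos : 0 < γ₁ τ₀) (hγ₂' : deriv γ₂ τ₀ < 0) :
    Filter.Tendsto
      (fun τ => deriv γ₂ τ * Real.sqrt ((γ₁ τ) ^ 2 - (chordX γ₁ γ₂ τ₀ τ) ^ 2)
        / (γ₁ τ * deriv γ₁ τ
            - chordX γ₁ γ₂ τ₀ τ * ((deriv γ₁ τ₀ / deriv γ₂ τ₀) * deriv γ₂ τ)))
      (𝓝[<] τ₀)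
      (𝓝 (|deriv γ₂ τ₀| *
        Real.sqrt (|deriv γ₂ τ₀| / (curvature γ₁ γ₂ τ₀ * γ₁ τ₀)))) := by
  have hd₁ : Differentiable ℝ γ₁ := fun τ => (hγ₁ τ trivial).differentiableAt
  have hd₂ : Differentiable ℝ γ₂ := fun τ => (hγ₂ τ trivial).differentiableAt
  have hdd₁ : Differentiable ℝ (deriv γ₁) := fun τ => (hγ₁.deriv τ trivial).differentiableAt
  have hdd₂ : Differentiable ℝ (deriv γ₂) := fun τ => (hγ₂.deriv τ trivial).differentiableAt
  have hD := hconv τ₀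
  have hg₀ : γ₁ τ₀ * deriv γ₁ τ₀
      - chordX γ₁ γ₂ τ₀ τ₀ * (deriv γ₁ τ₀ / deriv γ₂ τ₀ * deriv γ₂ τ₀) = 0 := by
    rw [chordX_self, div_mul_cancel₀ _ hγ₂'.ne, sub_self]
  have hlim := tendsto_mul_sqrt_div_nhdsLT_of_hasDerivAt
    (div_pos (mul_pos hpos hD) (neg_pos.mpr hγ₂'))
    (Eventually.of_forall fun τ => hasDerivAt_sq_sub_chordX_sq (hd₁ τ) (hd₂ τ))
    (hasDerivAt_mul_deriv_sub_chordX_mul_deriv hγ₂'.ne (hd₁ τ₀) (hd₂ τ₀) (hdd₁ τ₀) (hdd₂ τ₀))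
    (by simp) hg₀
    ((hdd₂.continuous.tendsto τ₀).mono_left nhdsWithin_le_nhds)
  convert hlim using 2
  rw [curvature_eq_abs_of_unit_speed hunit (hdd₁ τ₀) (hdd₂ τ₀), abs_of_pos hD,
    abs_of_neg hγ₂', div_eq_mul_inv _ (√_), ← Real.sqrt_inv, inv_div, mul_comm (γ₁ τ₀)]

/-- **Slope of the tangent line to the tangent-plane section.**
For a real-analytic, unit-speed, positively oriented strictly convex planar curve with
`γ₁(τ₀) > 0`, `γ₁'(τ₀) < 0`, `γ₂'(τ₀) < 0`, the quotient
`γ₂'(τ)·√(γ₁(τ)² − x(τ)²) / (γ₁(τ)γ₁'(τ) − x(τ)x'(τ))` converges, as `τ → τ₀⁻`, to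
`|γ₂'(τ₀)|·√(|γ₂'(τ₀)| / (κ(τ₀)γ₁(τ₀)))`, where `x'(τ) = (γ₁'(τ₀)/γ₂'(τ₀))γ₂'(τ)`. -/
theorem slope_limit_tangent_section
    (γ₁ γ₂ : ℝ → ℝ)
    (hγ₁ : AnalyticOnNhd ℝ γ₁ Set.univ) (hγ₂ : AnalyticOnNhd ℝ γ₂ Set.univ)
    (hunit : ∀ τ, (deriv γ₁ τ) ^ 2 + (deriv γ₂ τ) ^ 2 = 1)
    (hconv : ∀ τ, 0 < deriv γ₁ τ * deriv (deriv γ₂) τ - deriv γ₂ τ * deriv (deriv γ₁) τ)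
    (τ₀ : ℝ) (hpos : 0 < γ₁ τ₀) (hγ₁' : deriv γ₁ τ₀ < 0) (hγ₂' : deriv γ₂ τ₀ < 0) :
    Filter.Tendsto
      (fun τ => deriv γ₂ τ * Real.sqrt ((γ₁ τ) ^ 2 - (chordX γ₁ γ₂ τ₀ τ) ^ 2)
        / (γ₁ τ * deriv γ₁ τ
            - chordX γ₁ γ₂ τ₀ τ * ((deriv γ₁ τ₀ / deriv γ₂ τ₀) * deriv γ₂ τ)))
      (𝓝[<] τ₀)
      (𝓝 (|deriv γ₂ τ₀| *
        Real.sqrt (|deriv γ₂ τ₀| / (curvature γ₁ γ₂ τ₀ * γ₁ τ₀)))) :=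
  slope_limit_tangent_section_general γ₁ γ₂ hγ₁ hγ₂ hunit hconv τ₀ hpos hγ₂'
end

section
/- Let C > 0 and let (a_i)_{i∈ℕ} be a sequence of strictly positive real numbers satisfying |a_{i+1} − a_i| ≤ C·(a_i² + a_{i+1}²) for every i. Then the series Σ_i a_i diverges (i.e., the family (a_i) is not summable). -/
/-!
Once `C * a i ≤ 1/4`, the hypothesis forces consecutive terms to be comparable, and then
`|a (i+1) - a i| ≤ C (a i ^ 2 + a (i+1) ^ 2) ≤ 4 C a i a (i+1)`, i.e. the reciprocals grow by at most
`4 C` per step. Summability makes `a i → 0`, so this holds from some index on; then `1 / a i` grows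
at most linearly, `a i` is bounded below by a multiple of `1 / i`, and the harmonic series diverges.
-/

open Filter

theorem inv_sub_inv_le_of_abs_sub_le {C x y : ℝ} (hx : 0 < x) (hy : 0 < y)
    (hxy : |y - x| ≤ C * (x ^ 2 + y ^ 2)) (hCx : C * x ≤ 1 / 4) (hCy : C * y ≤ 1 / 4) :
    y⁻¹ - x⁻¹ ≤ 4 * C := by
  obtain ⟨hle, hge⟩ := abs_le.1 hxy
  have hC : 0 ≤ C := nonneg_of_mul_nonneg_left ((abs_nonneg _).trans hxy) (by positivity)
  -- `C (x² + y²) ≤ (x + y) / 4` puts `x / y` in `[3/5, 5/3]`, where `x² + y² ≤ 4 x y`.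
  have hxy_ratio : 3 * x ≤ 5 * y := by nlinarith
  have hyx_ratio : 3 * y ≤ 5 * x := by nlinarith
  have hsq : x ^ 2 + y ^ 2 ≤ 4 * (x * y) := by nlinarith
  have hdiff : x - y ≤ 4 * C * (x * y) := by nlinarith [mul_le_mul_of_nonneg_left hsq hC]
  rw [inv_sub_inv hy.ne' hx.ne', div_le_iff₀ (by positivity)]
  linarith

theorem le_add_mul_of_succ_le_add {b : ℕ → ℝ} {K : ℝ} (h : ∀ n, b (n + 1) ≤ b n + K) (n : ℕ) :
    b n ≤ b 0 + K * n := by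
  induction n with
  | zero => simp
  | succ n ih =>
    push_cast
    linarith [h n]

theorem not_summable_of_inv_le_add_mul {a : ℕ → ℝ} (hpos : ∀ n, 0 < a n) {A B : ℝ}
    (h : ∀ n, (a n)⁻¹ ≤ A + B * n) : ¬ Summable a := by
  intro hsum
  set M := |A| + |B| + 1
  have hM : 0 < M := by positivity
  -- At `n = 0` the bound is `M⁻¹ * 0⁻¹ = 0 < a 0`.
  have hlower : ∀ n : ℕ, M⁻¹ * (n : ℝ)⁻¹ ≤ a n := by
    intro n
    rcases Nat.eq_zero_or_pos n with rfl | hn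
    · simpa using (hpos 0).le
    have hn' : (1 : ℝ) ≤ n := by exact_mod_cast hn
    have hlin : (a n)⁻¹ ≤ M * n := by
      nlinarith [h n, le_abs_self A, le_abs_self B, abs_nonneg A, abs_nonneg B]
    rw [← mul_inv]
    exact inv_le_of_inv_le₀ (hpos n) hlin
  have hharm : Summable (fun n : ℕ => M⁻¹ * (n : ℝ)⁻¹) :=
    hsum.of_nonneg_of_le (fun n => by positivity) hlower
  exact Real.not_summable_natCast_inv ((summable_mul_left_iff (inv_ne_zero hM.ne')).1 hharm)

theorem not_summable_of_successive_quadratic_control_general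
    (C : ℝ) (a : ℕ → ℝ) (hpos : ∀ i, 0 < a i)
    (hrec : ∀ i, |a (i + 1) - a i| ≤ C * ((a i) ^ 2 + (a (i + 1)) ^ 2)) :
    ¬ Summable a := by
  intro hsum
  have hsmall : ∀ᶠ i in atTop, C * a i < 1 / 4 := by
    have := hsum.tendsto_atTop_zero.const_mul C
    rw [mul_zero] at this
    exact this.eventually (gt_mem_nhds (by norm_num))
  obtain ⟨N, hN⟩ := eventually_atTop.1 hsmall
  have hstep : ∀ k, (a (N + (k + 1)))⁻¹ ≤ (a (N + k))⁻¹ + 4 * C := fun k => by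
    have := inv_sub_inv_le_of_abs_sub_le (hpos (N + k)) (hpos (N + k + 1)) (hrec (N + k))
      (hN (N + k) (by omega)).le (hN (N + k + 1) (by omega)).le
    rw [← add_assoc]
    linarith
  have htail : ¬ Summable (fun k => a (N + k)) :=
    not_summable_of_inv_le_add_mul (fun k => hpos (N + k))
      (le_add_mul_of_succ_le_add (b := fun k => (a (N + k))⁻¹) hstep)
  exact htail ((summable_nat_add_iff N).2 hsum |>.congr fun k => by rw [add_comm])

/-- **No accumulation of bounces: divergence of the increments.**
If `C > 0` and `(a i)` is a sequence of strictly positive reals with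
`|a (i+1) - a i| ≤ C * (a i ^ 2 + a (i+1) ^ 2)` for every `i`, then the series `Σ a i`
diverges, i.e. the family `a` is not summable. -/
theorem not_summable_of_successive_quadratic_control
    (C : ℝ) (hC : 0 < C) (a : ℕ → ℝ) (hpos : ∀ i, 0 < a i)
    (hrec : ∀ i, |a (i + 1) - a i| ≤ C * ((a i) ^ 2 + (a (i + 1)) ^ 2)) :
    ¬ Summable a :=
  not_summable_of_successive_quadratic_control_general C a hpos hrec
end

section
/- Let ξ : ℝ³ → ℝ be real-analytic, let Ω := {y ∈ ℝ³ : ξ(y) < 0}, and for (x,v) ∈ ℝ³ × ℝ³ define the backward exit time t_b(x,v) := sup{τ ≥ 0 : x − s v ∈ closure(Ω) for all s ∈ [0,τ]} (with sup ∅ := 0) and the backward exit position x_b(x,v) := x − t_b(x,v)·v. Suppose (x₀,v₀) satisfies: x₀ ∈ Ω, v₀ ≠ 0, 0 < t_b(x₀,v₀) < ∞, x₀ − s v₀ ∈ Ω for all s ∈ [0, t_b(x₀,v₀)) (no grazing before exit), ξ(x_b(x₀,v₀)) = 0, and ∇ξ(x_b(x₀,v₀))·v₀ ≠ 0 (transversal,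 non-grazing exit). Then there is an open neighborhood of (x₀,v₀) on which the functions t_b, x_b, and the reflected velocity (x,v) ↦ v − 2(n(x_b(x,v))·v)·n(x_b(x,v)), where n := ∇ξ/|∇ξ|, are real-analytic. -/
open scoped RealInnerProductSpace

noncomputable section

/-- The set of backward times `τ ≥ 0` during which the straight backward trajectory from
`(x, v)` stays inside the closure of `Ω = {ξ < 0}`. -/
def backwardSet (ξ : EuclideanSpace ℝ (Fin 3) → ℝ) (x v : EuclideanSpace ℝ (Fin 3)) :
    Set ℝ :=
  {τ : ℝ | 0 ≤ τ ∧ ∀ s ∈ Set.Icc (0 : ℝ) τ, x - s • v ∈ closure {y | ξ y < 0}}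

/-- The backward exit time `t_b(x,v) := sup {τ ≥ 0 : x − s v ∈ Ω̄ for all 0 ≤ s ≤ τ}` (with
the real-supremum convention `sup ∅ = 0`). -/
def exitTime (ξ : EuclideanSpace ℝ (Fin 3) → ℝ) (x v : EuclideanSpace ℝ (Fin 3)) : ℝ :=
  sSup (backwardSet ξ x v)

/-- The backward exit position `x_b(x,v) := x − t_b(x,v) v`. -/
def exitPos (ξ : EuclideanSpace ℝ (Fin 3) → ℝ) (x v : EuclideanSpace ℝ (Fin 3)) :
    EuclideanSpace ℝ (Fin 3) :=
  x - exitTime ξ x v • v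

/-- The outward unit normal `n(y) := ∇ξ(y)/|∇ξ(y)|`. -/
def unitNormal (ξ : EuclideanSpace ℝ (Fin 3) → ℝ) (y : EuclideanSpace ℝ (Fin 3)) :
    EuclideanSpace ℝ (Fin 3) :=
  ‖gradient ξ y‖⁻¹ • gradient ξ y

/-!
Near a transversal exit, `t_b(x, v)` is the root `t` of `ξ (x - t • v) = 0` close to
`t_b(x₀, v₀)`, and the analytic implicit function theorem makes that root analytic in `(x, v)`.
It is the exit time for nearby `(x, v)` by stability: the compact initial piece of the ray stays in
`Ω`, and near the exit `t ↦ ξ (x - t • v)` is strictly increasing, because `∇ξ(x_b) · v₀ < 0`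
(nonzero by transversality, and not positive since the ray reaches `x_b` from inside `Ω`).
Then `x_b` is analytic, and so is the reflected velocity `v - (2 ⟪g, v⟫ / ⟪g, g⟫) • g`,
`g = ∇ξ(x_b)`, which needs no norm and has `g ≠ 0` at the exit.
-/

open scoped ContDiff
open Set Filter Topology

local notation "ℝ³" => EuclideanSpace ℝ (Fin 3)

section Analytic

variable {E F : Type*} [NormedAddCommGroup E] [NormedSpace ℝ E]
  [NormedAddCommGroup F] [InnerProductSpace ℝ F]

theorem AnalyticAt.inner {f g : E → F} {x : E} (hf : AnalyticAt ℝ f x) (hg : AnalyticAt ℝ g x) :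
    AnalyticAt ℝ (fun y => ⟪f y, g y⟫) x :=
  ((innerSL ℝ (E := F)).analyticAt_bilinear (f x, g x)).comp (f := fun y => (f y, g y))
    (hf.prod hg)

theorem AnalyticAt.gradient [CompleteSpace F] {f : F → ℝ} {x : F} (hf : AnalyticAt ℝ f x) :
    AnalyticAt ℝ (gradient f) x :=
  ((InnerProductSpace.toDual ℝ F).symm.toLinearIsometry.toContinuousLinearMap.analyticAt _).comp
    hf.fderiv

theorem sub_two_inner_normalize_smul_normalize (g v : F) :
    v - (2 * ⟪‖g‖⁻¹ • g, v⟫) • (‖g‖⁻¹ • g) = v - (2 * ⟪g, v⟫ / ⟪g, g⟫) • g := by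
  rcases eq_or_ne g 0 with rfl | hg
  · simp
  · rw [real_inner_smul_left, smul_smul, real_inner_self_eq_norm_sq]
    field_simp

theorem AnalyticAt.sub_two_inner_normalize_smul_normalize {g v : E → F} {x : E}
    (hg : AnalyticAt ℝ g x) (hv : AnalyticAt ℝ v x) (hgx : g x ≠ 0) :
    AnalyticAt ℝ (fun y => v y - (2 * ⟪‖g y‖⁻¹ • g y, v y⟫) • (‖g y‖⁻¹ • g y)) x := by
  simp only [_root_.sub_two_inner_normalize_smul_normalize]
  exact hv.sub (((analyticAt_const.mul (hg.inner hv)).div (hg.inner hg)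
    (inner_self_ne_zero.2 hgx)).smul hg)

end Analytic

section ImplicitFunction

variable {E : Type*} [NormedAddCommGroup E] [NormedSpace ℝ E] [CompleteSpace E]

theorem AnalyticAt.exists_implicitFunction {f : E × ℝ → ℝ} {u : E × ℝ} {c : ℝ}
    (hf : AnalyticAt ℝ f u) (hc : HasDerivAt (fun t => f (u.1, t)) c u.2) (hc0 : c ≠ 0) :
    ∃ ψ : E → ℝ, ψ u.1 = u.2 ∧ AnalyticAt ℝ ψ u.1 ∧ ∀ᶠ x in 𝓝 u.1, f (x, ψ x) = f u := by
  have cdf : ContDiffAt ℝ ω f u := hf.contDiffAt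
  have hinr : fderiv ℝ f u ∘L .inr ℝ E ℝ = .toSpanSingleton ℝ c :=
    (hf.differentiableAt.hasFDerivAt.comp u.2
      (hasFDerivAt_prodMk_right (𝕜 := ℝ) u.1 u.2)).unique hc.hasFDerivAt
  have if₂ : (fderiv ℝ f u ∘L .inr ℝ E ℝ).IsInvertible :=
    hinr ▸ ⟨ContinuousLinearEquiv.smulLeft (Units.mk0 c hc0), by ext; simp⟩
  exact ⟨cdf.implicitFunction (by simp) if₂, cdf.implicitFunction_apply_self _ _,
    (cdf.contDiffAt_implicitFunction _ _).analyticAt, cdf.eventually_apply_implicitFunction _ _⟩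

end ImplicitFunction

section Ray

variable {E F : Type*} [NormedAddCommGroup E] [NormedSpace ℝ E]
  [NormedAddCommGroup F] [NormedSpace ℝ F]

theorem HasFDerivAt.hasDerivAt_comp_sub_smul {f : E → F} {f' : E →L[ℝ] F} {x v : E} {t : ℝ}
    (hf : HasFDerivAt f f' (x - t • v)) : HasDerivAt (fun s : ℝ => f (x - s • v)) (-f' v) t := by
  have hline : HasDerivAt (fun s : ℝ => x - s • v) (-v) t := by
    simpa using ((hasDerivAt_id t).smul_const v).const_sub x
  have h := hf.comp_hasDerivAt t hline
  rwa [map_neg] at h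

theorem strictMonoOn_comp_sub_smul {f : E → ℝ} (hf : Differentiable ℝ f) {x v : E} {a b : ℝ}
    (hneg : ∀ s ∈ Icc a b, fderiv ℝ f (x - s • v) v < 0) :
    StrictMonoOn (fun s : ℝ => f (x - s • v)) (Icc a b) := by
  refine strictMonoOn_of_deriv_pos (convex_Icc a b)
    (hf.continuous.comp (by fun_prop)).continuousOn fun s hs => ?_
  rw [(hf _).hasFDerivAt.hasDerivAt_comp_sub_smul.deriv]
  exact neg_pos.2 (hneg s (interior_subset hs))

end Ray

theorem HasDerivAt.nonneg_of_eventually_le_left {g : ℝ → ℝ} {g' t : ℝ} (hg : HasDerivAt g g' t)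
    (hle : ∀ᶠ s in 𝓝[<] t, g s ≤ g t) : 0 ≤ g' := by
  have hslope : Tendsto (slope g t) (𝓝[<] t) (𝓝 g') := by
    simpa using hasDerivWithinAt_iff_tendsto_slope.1 (hg.hasDerivWithinAt (s := Iio t))
  refine ge_of_tendsto hslope ?_
  filter_upwards [hle, self_mem_nhdsWithin] with s hs hst
  rw [slope_def_field]
  exact div_nonneg_of_nonpos (by linarith) (by linarith [mem_Iio.1 hst])

section ExitTime

variable {ξ : ℝ³ → ℝ} {x v : ℝ³}

theorem exitTime_eq_of_sign_change (hξ : Continuous ξ) {t b : ℝ} (ht : 0 < t) (htb : t < b)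
    (hneg : ∀ s ∈ Ico 0 t, ξ (x - s • v) < 0) (hpos : ∀ s ∈ Ioc t b, 0 < ξ (x - s • v)) :
    exitTime ξ x v = t := by
  refine IsGreatest.csSup_eq ⟨⟨ht.le, fun s hs => ?_⟩, fun r ⟨hr0, hr⟩ => ?_⟩
  · rw [← closure_Ico ht.ne] at hs
    exact map_mem_closure (f := fun s : ℝ => x - s • v) (by fun_prop) hs hneg
  · by_contra! htr
    have hle := closure_lt_subset_le hξ continuous_const
      (hr (min r b) ⟨le_min hr0 (by linarith), min_le_left _ _⟩)
    exact (hpos _ ⟨lt_min htr htb, min_le_right _ _⟩).not_ge hle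

theorem exitTime_eq_of_strictMonoOn (hξ : Continuous ξ) {a b t : ℝ} (ha : 0 ≤ a)
    (ht : t ∈ Ioo a b) (hzero : ξ (x - t • v) = 0) (hneg : ∀ s ∈ Icc 0 a, ξ (x - s • v) < 0)
    (hmono : StrictMonoOn (fun s => ξ (x - s • v)) (Icc a b)) :
    exitTime ξ x v = t := by
  have htI : t ∈ Icc a b := Ioo_subset_Icc_self ht
  refine exitTime_eq_of_sign_change hξ (ha.trans_lt ht.1) ht.2 (fun s hs => ?_) fun s hs => ?_
  · rcases le_or_gt s a with hsa | has
    · exact hneg s ⟨hs.1, hsa⟩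
    · simpa [hzero] using hmono ⟨has.le, by linarith [hs.2, ht.2]⟩ htI hs.2
  · simpa [hzero] using hmono htI ⟨by linarith [hs.1, ht.1], hs.2⟩ hs.1

variable {x₀ v₀ : ℝ³}

theorem exitTime_eventuallyEq_of_root {ψ : ℝ³ × ℝ³ → ℝ} (hξ : ContDiff ℝ 1 ξ)
    (htb : 0 < exitTime ξ x₀ v₀) (hin : ∀ s ∈ Ico 0 (exitTime ξ x₀ v₀), ξ (x₀ - s • v₀) < 0)
    (hexit : fderiv ℝ ξ (exitPos ξ x₀ v₀) v₀ < 0)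
    (hψ : ContinuousAt ψ (x₀, v₀)) (hψ₀ : ψ (x₀, v₀) = exitTime ξ x₀ v₀)
    (hroot : ∀ᶠ p in 𝓝 (x₀, v₀), ξ (p.1 - ψ p • p.2) = 0) :
    (fun p : ℝ³ × ℝ³ => exitTime ξ p.1 p.2) =ᶠ[𝓝 (x₀, v₀)] ψ := by
  set T := exitTime ξ x₀ v₀
  have hD : Continuous fun q : (ℝ³ × ℝ³) × ℝ => fderiv ℝ ξ (q.1.1 - q.2 • q.1.2) q.1.2 :=
    ((hξ.continuous_fderiv one_ne_zero).comp (by fun_prop)).clm_apply (by fun_prop)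
  have hDray : Continuous fun s : ℝ => fderiv ℝ ξ (x₀ - s • v₀) v₀ :=
    hD.comp (f := fun s : ℝ => ((x₀, v₀), s)) (by fun_prop)
  obtain ⟨δ, ⟨hδ, hδT⟩, hδD⟩ : ∃ δ ∈ Ioo 0 T,
      Metric.closedBall T δ ⊆ {s | fderiv ℝ ξ (x₀ - s • v₀) v₀ < 0} :=
    (Eventually.and (Ioo_mem_nhdsGT htb) <| nhdsWithin_le_nhds <| eventually_closedBall_subset <|
      hDray.continuousAt.eventually_lt continuousAt_const hexit).exists
  rw [Real.closedBall_eq_Icc] at hδD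
  have hξray : Continuous fun q : (ℝ³ × ℝ³) × ℝ => ξ (q.1.1 - q.2 • q.1.2) :=
    hξ.continuous.comp (by fun_prop)
  have hneg : ∀ᶠ p in 𝓝 (x₀, v₀), ∀ s ∈ Icc 0 (T - δ), ξ (p.1 - s • p.2) < 0 :=
    isCompact_Icc.eventually_forall_of_forall_eventually fun s hs =>
      hξray.continuousAt.eventually_lt continuousAt_const (hin s ⟨hs.1, by linarith [hs.2]⟩)
  have hmono : ∀ᶠ p in 𝓝 (x₀, v₀), ∀ s ∈ Icc (T - δ) (T + δ),
      fderiv ℝ ξ (p.1 - s • p.2) p.2 < 0 :=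
    isCompact_Icc.eventually_forall_of_forall_eventually fun s hs =>
      hD.continuousAt.eventually_lt continuousAt_const (hδD hs)
  have hψT : ∀ᶠ p in 𝓝 (x₀, v₀), ψ p ∈ Ioo (T - δ) (T + δ) :=
    hψ.eventually_mem (hψ₀ ▸ Ioo_mem_nhds (by linarith) (by linarith))
  filter_upwards [hneg, hmono, hψT, hroot] with p hneg hmono hψT hroot
  exact exitTime_eq_of_strictMonoOn hξ.continuous (by linarith) hψT hroot hneg
    (strictMonoOn_comp_sub_smul (hξ.differentiable one_ne_zero) hmono)

theorem analyticAt_exitTime (hξ : AnalyticOnNhd ℝ ξ univ)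
    (htb : 0 < exitTime ξ x₀ v₀) (hin : ∀ s ∈ Ico 0 (exitTime ξ x₀ v₀), ξ (x₀ - s • v₀) < 0)
    (hbd : ξ (exitPos ξ x₀ v₀) = 0) (htrans : fderiv ℝ ξ (exitPos ξ x₀ v₀) v₀ ≠ 0) :
    AnalyticAt ℝ (fun p : ℝ³ × ℝ³ => exitTime ξ p.1 p.2) (x₀, v₀) := by
  have hray : HasDerivAt (fun s => ξ (x₀ - s • v₀)) (-fderiv ℝ ξ (exitPos ξ x₀ v₀) v₀)
      (exitTime ξ x₀ v₀) :=
    (hξ _ trivial).differentiableAt.hasFDerivAt.hasDerivAt_comp_sub_smul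
  have hexit : fderiv ℝ ξ (exitPos ξ x₀ v₀) v₀ < 0 := by
    refine htrans.lt_of_le (neg_nonneg.1 (hray.nonneg_of_eventually_le_left ?_))
    filter_upwards [Ioo_mem_nhdsLT htb] with s hs
    exact (hin s ⟨hs.1.le, hs.2⟩).le.trans_eq hbd.symm
  obtain ⟨ψ, hψ₀, hψ, hroot⟩ := AnalyticAt.exists_implicitFunction
    (f := fun q : (ℝ³ × ℝ³) × ℝ => ξ (q.1.1 - q.2 • q.1.2)) (u := ((x₀, v₀), exitTime ξ x₀ v₀))
    ((hξ _ trivial).comp ((analyticAt_fst.comp analyticAt_fst).sub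
      (analyticAt_snd.smul (analyticAt_snd.comp analyticAt_fst)))) hray (neg_ne_zero.2 htrans)
  exact hψ.congr (exitTime_eventuallyEq_of_root (hξ.contDiff.of_le le_top) htb hin hexit
    hψ.continuousAt hψ₀ (hroot.mono fun p hp => hp.trans hbd)).symm

end ExitTime

theorem billiard_step_analytic_general
    (ξ : EuclideanSpace ℝ (Fin 3) → ℝ) (hξ : AnalyticOnNhd ℝ ξ Set.univ)
    (x₀ v₀ : EuclideanSpace ℝ (Fin 3))
    (htb : 0 < exitTime ξ x₀ v₀)
    (hin : ∀ s ∈ Set.Ico (0 : ℝ) (exitTime ξ x₀ v₀), ξ (x₀ - s • v₀) < 0)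
    (hbd : ξ (exitPos ξ x₀ v₀) = 0)
    (htrans : ⟪gradient ξ (exitPos ξ x₀ v₀), v₀⟫ ≠ 0) :
    ∃ V : Set (EuclideanSpace ℝ (Fin 3) × EuclideanSpace ℝ (Fin 3)),
      IsOpen V ∧ (x₀, v₀) ∈ V ∧
      AnalyticOnNhd ℝ (fun p => exitTime ξ p.1 p.2) V ∧
      AnalyticOnNhd ℝ (fun p => exitPos ξ p.1 p.2) V ∧
      AnalyticOnNhd ℝ
        (fun p => p.2 - (2 * ⟪unitNormal ξ (exitPos ξ p.1 p.2), p.2⟫) •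
          unitNormal ξ (exitPos ξ p.1 p.2)) V := by
  have hT := analyticAt_exitTime hξ htb hin hbd (by rwa [← inner_gradient_left])
  have hxb : AnalyticAt ℝ (fun p : ℝ³ × ℝ³ => exitPos ξ p.1 p.2) (x₀, v₀) :=
    analyticAt_fst.sub (hT.smul analyticAt_snd)
  have hreflect := ((hξ _ trivial).gradient.comp hxb).sub_two_inner_normalize_smul_normalize
    analyticAt_snd fun h => htrans (by rw [Function.comp_apply] at h; rw [h, inner_zero_left])
  obtain ⟨V, hV, hVopen, hV₀⟩ := eventually_nhds_iff.1 <| hT.eventually_analyticAt.and <|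
    hxb.eventually_analyticAt.and hreflect.eventually_analyticAt
  exact ⟨V, hVopen, hV₀, fun p hp => (hV p hp).1, fun p hp => (hV p hp).2.1,
    fun p hp => (hV p hp).2.2⟩

/-- **Local analyticity of one billiard step away from grazing.**
Let `ξ` be real-analytic, `Ω = {ξ < 0}`. If `(x₀, v₀)` satisfies `x₀ ∈ Ω`, `v₀ ≠ 0`,
`0 < t_b(x₀,v₀) < ∞`, the backward trajectory stays in `Ω` before exiting, the exit point is
on the boundary `{ξ = 0}`, and the exit is transversal (`∇ξ(x_b)·v₀ ≠ 0`), then `t_b`, `x_b`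
and the reflected velocity `(x,v) ↦ v − 2(n(x_b(x,v))·v) n(x_b(x,v))` are real-analytic on
an open neighborhood of `(x₀, v₀)`. -/
theorem billiard_step_analytic
    (ξ : EuclideanSpace ℝ (Fin 3) → ℝ) (hξ : AnalyticOnNhd ℝ ξ Set.univ)
    (x₀ v₀ : EuclideanSpace ℝ (Fin 3))
    (hx₀ : ξ x₀ < 0) (hv₀ : v₀ ≠ 0)
    (hfin : BddAbove (backwardSet ξ x₀ v₀))
    (htb : 0 < exitTime ξ x₀ v₀)
    (hin : ∀ s ∈ Set.Ico (0 : ℝ) (exitTime ξ x₀ v₀), ξ (x₀ - s • v₀) < 0)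
    (hbd : ξ (exitPos ξ x₀ v₀) = 0)
    (htrans : ⟪gradient ξ (exitPos ξ x₀ v₀), v₀⟫ ≠ 0) :
    ∃ V : Set (EuclideanSpace ℝ (Fin 3) × EuclideanSpace ℝ (Fin 3)),
      IsOpen V ∧ (x₀, v₀) ∈ V ∧
      AnalyticOnNhd ℝ (fun p => exitTime ξ p.1 p.2) V ∧
      AnalyticOnNhd ℝ (fun p => exitPos ξ p.1 p.2) V ∧
      AnalyticOnNhd ℝ
        (fun p => p.2 - (2 * ⟪unitNormal ξ (exitPos ξ p.1 p.2), p.2⟫) •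
          unitNormal ξ (exitPos ξ p.1 p.2)) V :=
  billiard_step_analytic_general ξ hξ x₀ v₀ htb hin hbd htrans

end
end
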